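/- arXiv:2412.18982 — 4 statements merged into one kernel-verified Lean document; each statement's English description precedes it below -/
import Mathlib

section
/- Let 𝒜 be an almost disjoint family on ω, and let ℬ, 𝒞 ⊆ 𝒜 be disjoint. Then ℬ and 𝒞 can be separated by a set X ⊆ ω (i.e., b ⊆* X for all b ∈ ℬ and c ∩ X =* ∅ for all c ∈ 𝒞) if and only if there exist disjoint open sets G, G′ in the Isbell–Mrówka space Ψ(𝒜) with ℬ ⊆ G and 𝒞 ⊆ G′. -/
/-! A set `G` is open in `Ψ(𝒜)` exactly when every `a ∈ 𝒜` lying in `G` has all but finitely many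
of its points in `G`. So if `G, G'` are disjoint open sets containing `ℬ` and `𝒞`, the trace
`X = G ∩ ω` contains almost all of each `b ∈ ℬ`, and almost none of each `c ∈ 𝒞` because `c` is
almost contained in `G' ∩ ω`. Conversely, a separating `X` yields the disjoint open sets `X ∪ ℬ` and
`(ω \ X) ∪ 𝒞`. -/

/-- An almost disjoint family on `N`: infinite sets with pairwise finite intersections. -/
def IsAlmostDisjointFamily {N : Type} (A : Set (Set N)) : Prop :=
  (∀ a ∈ A, a.Infinite) ∧ ∀ a ∈ A, ∀ b ∈ A, a ≠ b → (a ∩ b).Finite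

/-- Carrier of the Isbell–Mrówka space of `A`. -/
def Psi (N : Type) (A : Set (Set N)) : Type := N ⊕ ↥A

/-- Basic open sets of the Isbell–Mrówka space: singletons of isolated points of `N`,
and sets of the form `{a} ∪ (a \ F)` for `a ∈ A` and finite `F ⊆ N`. -/
def psiBasic (N : Type) (A : Set (Set N)) : Set (Set (Psi N A)) :=
  {s | ∃ n : N, s = {(Sum.inl n : Psi N A)}} ∪
  {s | ∃ (a : ↥A) (F : Finset N),
      s = insert (Sum.inr a) ((Sum.inl : N → Psi N A) '' ((a : Set N) \ ↑F))}

/-- The Isbell–Mrówka topology. -/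
def psiTopology (N : Type) (A : Set (Set N)) : TopologicalSpace (Psi N A) :=
  TopologicalSpace.generateFrom (psiBasic N A)

instance (N : Type) (A : Set (Set N)) : TopologicalSpace (Psi N A) := psiTopology N A

namespace Psi

variable {N : Type} {A : Set (Set N)}

/- `Psi` is a plain definition, so `Sum.inl n` and `Sum.inr a` would be typed in `N ⊕ A`, which
carries no topology; these name the two kinds of points of `Psi N A`. -/
def inl (n : N) : Psi N A := Sum.inl n

def inr (a : A) : Psi N A := Sum.inr a

theorem inl_injective : Function.Injective (inl : N → Psi N A) := Sum.inl_injective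

theorem inr_injective : Function.Injective (inr : A → Psi N A) := Sum.inr_injective

theorem inl_ne_inr {n : N} {a : A} : inl n ≠ inr a := Sum.inl_ne_inr

theorem isOpen_of_mem_psiBasic {s : Set (Psi N A)} (hs : s ∈ psiBasic N A) : IsOpen s :=
  TopologicalSpace.GenerateOpen.basic s hs

theorem finite_diff_preimage_inl_of_isOpen {G : Set (Psi N A)} (hG : IsOpen G) (a : A)
    (ha : inr a ∈ G) : ((a : Set N) \ inl ⁻¹' G).Finite := by
  induction hG generalizing a with
  | basic s hs =>
    rcases hs with ⟨n, rfl⟩ | ⟨a', F, rfl⟩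
    · exact absurd ha inl_ne_inr.symm
    · obtain rfl : a = a' := inr_injective (Set.mem_insert_iff.mp ha |>.resolve_right
        fun ⟨_, _, h⟩ => inl_ne_inr h)
      refine F.finite_toSet.subset fun n hn => by_contra fun hnF => hn.2 ?_
      exact Set.mem_insert_of_mem _ ⟨n, ⟨hn.1, hnF⟩, rfl⟩
  | univ => simp only [Set.preimage_univ, Set.sdiff_univ, Set.finite_empty]
  | inter s t _ _ ihs iht =>
    rw [Set.preimage_inter, Set.sdiff_inter]
    exact (ihs a ha.1).union (iht a ha.2)
  | sUnion S _ ih =>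
    obtain ⟨s, hsS, has⟩ := ha
    exact (ih s hsS a has).subset <| Set.sdiff_subset_sdiff_right <|
      Set.preimage_mono <| Set.subset_sUnion_of_mem hsS

theorem isOpen_iff {G : Set (Psi N A)} :
    IsOpen G ↔ ∀ a : A, inr a ∈ G → ((a : Set N) \ inl ⁻¹' G).Finite := by
  refine ⟨finite_diff_preimage_inl_of_isOpen, fun h => isOpen_iff_forall_mem_open.mpr ?_⟩
  rintro (n | a) hp
  · exact ⟨{inl n}, Set.singleton_subset_iff.mpr hp,
      isOpen_of_mem_psiBasic (Or.inl ⟨n, rfl⟩), rfl⟩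
  · refine ⟨_, ?_, isOpen_of_mem_psiBasic (Or.inr ⟨a, (h a hp).toFinset, rfl⟩),
      Set.mem_insert _ _⟩
    rintro q (rfl | ⟨n, hn, rfl⟩)
    · exact hp
    · by_contra hnG
      exact hn.2 ((h a hp).mem_toFinset.mpr ⟨hn.1, hnG⟩)

theorem isOpen_image_inl_union_image_inr {X : Set N} {S : Set A}
    (hS : ∀ a ∈ S, ((a : Set N) \ X).Finite) : IsOpen (inl '' X ∪ inr '' S) := by
  refine isOpen_iff.mpr fun a ha => ?_
  have haS : a ∈ S := by
    rcases ha with ⟨n, -, h⟩ | ⟨a', ha', h⟩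
    · exact absurd h inl_ne_inr
    · rwa [← inr_injective h]
  exact (hS a haS).subset <| Set.sdiff_subset_sdiff_right <|
    (Set.subset_preimage_image _ _).trans (Set.preimage_mono Set.subset_union_left)

theorem disjoint_image_inl_union_image_inr {X Y : Set N} {S T : Set A}
    (hXY : Disjoint X Y) (hST : Disjoint S T) :
    Disjoint (inl '' X ∪ inr '' S) (inl '' Y ∪ inr '' T) := by
  have hinl_inr {U : Set N} {V : Set A} : Disjoint (inl '' U) (inr '' V) :=
    Set.disjoint_image_inl_image_inr
  simp only [Set.disjoint_union_left, Set.disjoint_union_right, hinl_inr, hinl_inr.symm,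
    Set.disjoint_image_iff inl_injective, Set.disjoint_image_iff inr_injective, hXY, hST,
    and_self]

end Psi

theorem separation_iff_open_separation_in_psi_general (A : Set (Set ℕ))
    (B C : Set (Set ℕ))
    (hB : B ⊆ A) (hC : C ⊆ A) (hBC : Disjoint B C) :
    (∃ X : Set ℕ, (∀ b ∈ B, (b \ X).Finite) ∧ (∀ c ∈ C, (c ∩ X).Finite)) ↔
    (∃ G G' : Set (Psi ℕ A), IsOpen G ∧ IsOpen G' ∧ Disjoint G G' ∧
      (∀ a : ↥A, (a : Set ℕ) ∈ B → (Sum.inr a : Psi ℕ A) ∈ G) ∧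
      (∀ a : ↥A, (a : Set ℕ) ∈ C → (Sum.inr a : Psi ℕ A) ∈ G')) := by
  constructor
  · rintro ⟨X, hBX, hCX⟩
    refine ⟨Psi.inl '' X ∪ Psi.inr '' {a | (a : Set ℕ) ∈ B},
      Psi.inl '' Xᶜ ∪ Psi.inr '' {a | (a : Set ℕ) ∈ C},
      Psi.isOpen_image_inl_union_image_inr fun a => hBX a,
      Psi.isOpen_image_inl_union_image_inr fun a ha => Set.sdiff_compl ▸ hCX a ha,
      Psi.disjoint_image_inl_union_image_inr disjoint_compl_right (hBC.preimage _),
      fun a ha => Or.inr ⟨a, ha, rfl⟩, fun a ha => Or.inr ⟨a, ha, rfl⟩⟩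
  · rintro ⟨G, G', hG, hG', hGG', hBG, hCG'⟩
    refine ⟨Psi.inl ⁻¹' G, fun b hb => ?_, fun c hc => ?_⟩
    · exact Psi.isOpen_iff.mp hG ⟨b, hB hb⟩ (hBG ⟨b, hB hb⟩ hb)
    · refine (Psi.isOpen_iff.mp hG' ⟨c, hC hc⟩ (hCG' ⟨c, hC hc⟩ hc)).subset ?_
      exact Set.subset_sdiff.mpr
        ⟨Set.inter_subset_left, (hGG'.preimage Psi.inl).mono_left Set.inter_subset_right⟩

theorem separation_iff_open_separation_in_psi (A : Set (Set ℕ))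
    (hA : IsAlmostDisjointFamily A) (B C : Set (Set ℕ))
    (hB : B ⊆ A) (hC : C ⊆ A) (hBC : Disjoint B C) :
    (∃ X : Set ℕ, (∀ b ∈ B, (b \ X).Finite) ∧ (∀ c ∈ C, (c ∩ X).Finite)) ↔
    (∃ G G' : Set (Psi ℕ A), IsOpen G ∧ IsOpen G' ∧ Disjoint G G' ∧
      (∀ a : ↥A, (a : Set ℕ) ∈ B → (Sum.inr a : Psi ℕ A) ∈ G) ∧
      (∀ a : ↥A, (a : Set ℕ) ∈ C → (Sum.inr a : Psi ℕ A) ∈ G')) :=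
  separation_iff_open_separation_in_psi_general A B C hB hC hBC
end

section
/- Let ℒ be a ♣*-ladder system on ω₁, S ⊆ ω₁ stationary, and U an open neighbourhood of S × {1} in the ladder system space Ψ(ℒ). Then (ω₁ × {0}) \ U is countable. -/
/-- The first uncountable ordinal. -/
noncomputable def w1 : Ordinal := (Cardinal.aleph 1).ord

/-- `C` is a club (closed unbounded set) in `ω₁`. -/
def IsClubIn (C : Set Ordinal) : Prop :=
  C ⊆ Set.Iio w1 ∧
  (∀ s : Set Ordinal, s ⊆ C → s.Nonempty → sSup s < w1 → sSup s ∈ C) ∧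
  (∀ o < w1, ∃ c ∈ C, o ≤ c)

/-- `S` is a stationary subset of `ω₁`. -/
def IsStationaryIn (S : Set Ordinal) : Prop :=
  S ⊆ Set.Iio w1 ∧ ∀ C : Set Ordinal, IsClubIn C → (S ∩ C).Nonempty

/-- `L` is a ladder system on `ω₁`: for each countable limit ordinal `α`, `L α` is a
cofinal subset of `α` of order type `ω`. -/
def IsLadderSystem (L : Ordinal → Set Ordinal) : Prop :=
  ∀ α, α < w1 → Order.IsSuccLimit α →
    (L α ⊆ Set.Iio α) ∧ (∀ β < α, ∃ γ ∈ L α, β < γ) ∧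
    (∀ β < α, (L α ∩ Set.Iio β).Finite)

/-- The ladder system `L` is a `♣*`-sequence: for every uncountable `A ⊆ ω₁`, the set of
limit ordinals `α` with `L α ∩ A` infinite contains a club. -/
def IsClubsuitStar (L : Ordinal → Set Ordinal) : Prop :=
  ∀ A : Set Ordinal, A ⊆ Set.Iio w1 → ¬ A.Countable →
    ∃ C : Set Ordinal, IsClubIn C ∧ ∀ α ∈ C, Order.IsSuccLimit α ∧ (L α ∩ A).Infinite

/-- Carrier of the ladder system space `Ψ(ℒ)`: `(ω₁ × {0}) ∪ (Lim × {1})`, where the left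
summand is the copy of `ω₁` (level 0) and the right summand the copy of the countable
limit ordinals (level 1). -/
def LPsi : Type 1 := {o : Ordinal // o < w1} ⊕ {o : Ordinal // o < w1 ∧ Order.IsSuccLimit o}

/-- Basic open sets of `Ψ(ℒ)`: singletons at level 0, and sets
`{(α,1)} ∪ ((L α \ ξ) × {0})` for limit `α` and `ξ < α`. -/
def lBasic (L : Ordinal → Set Ordinal) : Set (Set LPsi) :=
  {s | ∃ p : {o : Ordinal // o < w1}, s = {(Sum.inl p : LPsi)}} ∪
  {s | ∃ (a : {o : Ordinal // o < w1 ∧ Order.IsSuccLimit o}) (ξ : Ordinal), ξ < a.1 ∧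
      s = insert (Sum.inr a)
        ((Sum.inl : {o : Ordinal // o < w1} → LPsi) ''
          {p : {o : Ordinal // o < w1} | p.1 ∈ L a.1 ∧ ξ ≤ p.1})}

/-- The topology of the ladder system space `Ψ(ℒ)`. -/
def lTop (L : Ordinal → Set Ordinal) : TopologicalSpace LPsi :=
  TopologicalSpace.generateFrom (lBasic L)

/-!
Suppose the set `A` of `β < ω₁` with `(β, 0) ∉ U` were uncountable. By `♣*` there is a club of
limits `α` whose ladder meets `A` in an infinite set, and by stationarity such an `α` lies in `S`,
so `(α, 1) ∈ U`. Then `U` contains a basic neighbourhood `{(α, 1)} ∪ (L α \ ξ) × {0}`, which forces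
`L α ∩ A ⊆ ξ`; but a ladder has only finitely many points below any `ξ < α`.
-/

def ladderNbhd (L : Ordinal → Set Ordinal) (a : {o : Ordinal // o < w1 ∧ Order.IsSuccLimit o})
    (ξ : Ordinal) : Set LPsi :=
  insert (Sum.inr a)
    ((Sum.inl : {o : Ordinal // o < w1} → LPsi) ''
      {p : {o : Ordinal // o < w1} | p.1 ∈ L a.1 ∧ ξ ≤ p.1})

section LadderNbhd

variable {L : Ordinal → Set Ordinal} {a : {o : Ordinal // o < w1 ∧ Order.IsSuccLimit o}}

lemma ladderNbhd_anti {ξ η : Ordinal} (h : ξ ≤ η) : ladderNbhd L a η ⊆ ladderNbhd L a ξ :=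
  Set.insert_subset_insert <| Set.image_mono fun _ hp => ⟨hp.1, h.trans hp.2⟩

lemma exists_ladderNbhd_subset_of_isOpen {U : Set LPsi} (hU : (lTop L).IsOpen U)
    (ha : Sum.inr a ∈ U) : ∃ ξ < a.1, ladderNbhd L a ξ ⊆ U := by
  induction hU with
  | basic V hV =>
    rcases hV with ⟨p, rfl⟩ | ⟨b, ξ, hξ, rfl⟩
    · exact absurd (Set.mem_singleton_iff.mp ha) Sum.inr_ne_inl
    · obtain rfl : a = b := by
        rcases ha with h | ⟨_, -, h⟩
        · exact Sum.inr_injective h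
        · exact absurd h Sum.inl_ne_inr
      exact ⟨ξ, hξ, subset_rfl⟩
  | univ => exact ⟨0, a.2.2.pos, Set.subset_univ _⟩
  | inter V W _ _ ihV ihW =>
    obtain ⟨ξ₁, hξ₁, h₁⟩ := ihV ha.1
    obtain ⟨ξ₂, hξ₂, h₂⟩ := ihW ha.2
    exact ⟨max ξ₁ ξ₂, max_lt hξ₁ hξ₂, Set.subset_inter
      ((ladderNbhd_anti (le_max_left _ _)).trans h₁)
      ((ladderNbhd_anti (le_max_right _ _)).trans h₂)⟩
  | sUnion s _ ih =>
    obtain ⟨V, hVs, haV⟩ := ha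
    obtain ⟨ξ, hξ, h⟩ := ih V hVs haV
    exact ⟨ξ, hξ, h.trans (Set.subset_sUnion_of_mem hVs)⟩

lemma finite_ladder_inter_image_compl_of_isOpen (hL : IsLadderSystem L) {U : Set LPsi}
    (hU : (lTop L).IsOpen U) (ha : Sum.inr a ∈ U) :
    (L a.1 ∩ Subtype.val '' {p | (Sum.inl p : LPsi) ∉ U}).Finite := by
  obtain ⟨ξ, hξ, hsub⟩ := exists_ladderNbhd_subset_of_isOpen hU ha
  refine ((hL a.1 a.2.1 a.2.2).2.2 ξ hξ).subset ?_
  rintro _ ⟨hβL, p, hpU, rfl⟩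
  refine ⟨hβL, Set.mem_Iio.2 <| lt_of_not_ge fun hξp => hpU ?_⟩
  exact hsub (Set.mem_insert_of_mem _ ⟨p, ⟨hβL, hξp⟩, rfl⟩)

end LadderNbhd

theorem clubsuitStar_open_nbhd_of_stationary_co_countable
    (L : Ordinal → Set Ordinal) (hL : IsLadderSystem L) (hcs : IsClubsuitStar L)
    (S : Set Ordinal) (hS : IsStationaryIn S)
    (U : Set LPsi) (hUopen : (lTop L).IsOpen U)
    (hSU : ∀ α, ∀ h : α < w1 ∧ Order.IsSuccLimit α, α ∈ S → (Sum.inr ⟨α, h⟩ : LPsi) ∈ U) :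
    {p : {o : Ordinal // o < w1} | (Sum.inl p : LPsi) ∉ U}.Countable := by
  set P := {p : {o : Ordinal // o < w1} | (Sum.inl p : LPsi) ∉ U}
  by_contra hP
  have hA : ¬ (Subtype.val '' P).Countable := fun hA =>
    hP (Set.countable_of_injective_of_countable_image Subtype.val_injective.injOn hA)
  obtain ⟨C, hC, hCladder⟩ := hcs _ (by rintro _ ⟨p, -, rfl⟩; exact p.2) hA
  obtain ⟨α, hαS, hαC⟩ := hS.2 C hC
  obtain ⟨hαlim, hinf⟩ := hCladder α hαC
  exact hinf <| finite_ladder_inter_image_compl_of_isOpen (a := ⟨α, hC.1 hαC, hαlim⟩) hL hUopen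
    (hSU α _ hαS)
end

section
/- Let ℒ be a ♣*-ladder system on ω₁, 𝕌 a uniformity generating the topology of Ψ(ℒ), U ∈ 𝕌, and S ⊆ ω₁ stationary. Then there exists a stationary S′ ⊆ S such that (S′ × {1}) × (S′ × {1}) ⊆ U. -/
/-! Each point `(α, 1)` with `α ∈ S` limit has points `(γ, 0)` of its ladder, hence `γ < α`,
arbitrarily close to it. Fix a symmetric entourage `V` with `V ○ V ⊆ U` and pick for every such
`α` a ladder point `γ_α < α` with `((α, 1), (γ_α, 0)) ∈ V`. By the pressing-down lemma `γ_α` is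
constant, say `γ`, on a stationary `S' ⊆ S`, and then any two points of `S' × {1}` are
`U`-close through `(γ, 0)`. -/

open Set Order Ordinal Cardinal

lemma w1_eq_omega_one : w1 = ω₁ := ord_aleph 1

lemma sSup_lt_w1 {s : Set Ordinal} (hs : s.Countable) (h : ∀ x ∈ s, x < w1) : sSup s < w1 := by
  have := hs.to_subtype
  rw [sSup_eq_iSup', w1_eq_omega_one]
  exact iSup_lt_omega_one fun x => w1_eq_omega_one ▸ h x x.2

lemma countable_Iio_of_lt_w1 {β : Ordinal} (hβ : β < w1) : (Iio β).Countable := by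
  rw [← le_aleph0_iff_set_countable, Cardinal.mk_Iio_ordinal, lift_le_aleph0, ← lt_aleph_one_iff,
    ← lt_ord]
  exact hβ

lemma nfp_lt_w1 {f : Ordinal → Ordinal} (hf : ∀ β < w1, f β < w1) {a : Ordinal} (ha : a < w1) :
    nfp f a < w1 :=
  nfp_lt_ord (by rw [w1_eq_omega_one, cof_omega_one]; exact aleph0_lt_aleph_one) hf ha

namespace IsClubIn

variable {C : Set Ordinal}

lemma iSup_mem (hC : IsClubIn C) {c : ℕ → Ordinal} (hc : ∀ n, c n ∈ C) : ⨆ n, c n ∈ C :=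
  hC.2.1 _ (range_subset_iff.2 hc) (range_nonempty c)
    (sSup_lt_w1 (countable_range c) (forall_mem_range.2 fun n => hC.1 (hc n)))

end IsClubIn

def diagInter (C : Ordinal → Set Ordinal) : Set Ordinal :=
  {α | α < w1 ∧ ∀ γ < α, α ∈ C γ}

section DiagInter

variable {C : Ordinal → Set Ordinal}

lemma sSup_mem_diagInter (hC : ∀ γ, IsClubIn (C γ)) {s : Set Ordinal} (hs : s ⊆ diagInter C)
    (hne : s.Nonempty) (hlt : sSup s < w1) : sSup s ∈ diagInter C := by
  refine ⟨hlt, fun γ hγ => ?_⟩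
  obtain ⟨y, hys, hγy⟩ := exists_lt_of_lt_csSup hne hγ
  have htail : sSup {α ∈ s | γ < α} = sSup s := by
    refine csSup_eq_csSup_of_forall_exists_le (fun x hx => ⟨x, hx.1, le_rfl⟩) fun x hx => ?_
    rcases lt_or_ge γ x with hγx | hxγ
    · exact ⟨x, ⟨hx, hγx⟩, le_rfl⟩
    · exact ⟨y, ⟨hys, hγy⟩, hxγ.trans hγy.le⟩
  rw [← htail] at hlt ⊢
  exact (hC γ).2.1 _ (fun α hα => (hs hα.1).2 γ hα.2) ⟨y, hys, hγy⟩ hlt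

/-- The witness is `nfp F o`, where `F β` bounds an element of `C γ` above `β` for every
`γ < β`: below the fixed point, every `C γ` meets each interval `[F^[k] o, F^[k+1] o]`. -/
lemma exists_mem_diagInter_ge (hC : ∀ γ, IsClubIn (C γ)) {o : Ordinal} (ho : o < w1) :
    ∃ α ∈ diagInter C, o ≤ α := by
  choose! g hgC hge using fun γ β (hβ : β < w1) => (hC γ).2.2 β hβ
  have hglt : ∀ γ, ∀ β < w1, g γ β < w1 := fun γ β hβ => (hC γ).1 (hgC γ β hβ)
  set F : Ordinal → Ordinal := fun β => sSup (insert β ((g · β) '' Iio β))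
  have hbdd : ∀ β < w1, BddAbove (insert β ((g · β) '' Iio β)) := fun β hβ =>
    ⟨w1, forall_mem_insert .. |>.2 ⟨hβ.le, forall_mem_image.2 fun γ _ => (hglt γ β hβ).le⟩⟩
  have hF : ∀ β < w1, F β < w1 := fun β hβ =>
    sSup_lt_w1 (((countable_Iio_of_lt_w1 hβ).image _).insert β)
      (forall_mem_insert .. |>.2 ⟨hβ, forall_mem_image.2 fun γ _ => hglt γ β hβ⟩)
  have hgF : ∀ β < w1, ∀ γ < β, g γ β ≤ F β := fun β hβ γ hγ =>
    le_csSup (hbdd β hβ) (mem_insert_of_mem _ ⟨γ, hγ, rfl⟩)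
  have hiter_lt : ∀ k, F^[k] o < w1 := fun k => (iterate_le_nfp F o k).trans_lt (nfp_lt_w1 hF ho)
  have hiter_mono : Monotone fun k => F^[k] o := monotone_nat_of_le_succ fun k => by
    rw [Function.iterate_succ_apply']
    exact le_csSup (hbdd _ (hiter_lt k)) (mem_insert _ _)
  refine ⟨nfp F o, ⟨nfp_lt_w1 hF ho, fun γ hγ => ?_⟩, le_nfp F o⟩
  obtain ⟨n, hn⟩ := lt_nfp_iff.1 hγ
  have hγk : ∀ m, γ < F^[n + m] o := fun m => hn.trans_le (hiter_mono (Nat.le_add_right n m))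
  suffices h : ⨆ m, g γ (F^[n + m] o) = nfp F o from
    h ▸ (hC γ).iSup_mem fun m => hgC γ _ (hiter_lt _)
  refine le_antisymm (Ordinal.iSup_le fun m => ?_) (nfp_le fun k => ?_)
  · calc g γ (F^[n + m] o) ≤ F (F^[n + m] o) := hgF _ (hiter_lt _) γ (hγk m)
      _ = F^[n + m + 1] o := (Function.iterate_succ_apply' F _ o).symm
      _ ≤ nfp F o := iterate_le_nfp F o _
  · calc F^[k] o ≤ F^[n + k] o := hiter_mono (Nat.le_add_left k n)
      _ ≤ g γ (F^[n + k] o) := hge γ _ (hiter_lt _)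
      _ ≤ ⨆ m, g γ (F^[n + m] o) := Ordinal.le_iSup (fun m => g γ (F^[n + m] o)) k

theorem isClubIn_diagInter (hC : ∀ γ, IsClubIn (C γ)) : IsClubIn (diagInter C) :=
  ⟨fun _ h => h.1, fun _ => sSup_mem_diagInter hC, fun _ => exists_mem_diagInter_ge hC⟩

end DiagInter

namespace IsClubIn

variable {C₁ C₂ : Set Ordinal}

theorem inter (h₁ : IsClubIn C₁) (h₂ : IsClubIn C₂) : IsClubIn (C₁ ∩ C₂) := by
  refine ⟨fun x hx => h₁.1 hx.1, fun s hs hne hlt =>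
    ⟨h₁.2.1 s (fun x hx => (hs hx).1) hne hlt, h₂.2.1 s (fun x hx => (hs hx).2) hne hlt⟩,
    fun o ho => ?_⟩
  -- a point of the diagonal intersection of `C₁, C₂, C₂, …` above `1` lies in `C₁ ∩ C₂`
  have hD := isClubIn_diagInter (C := fun γ => if γ = 0 then C₁ else C₂) fun γ => by
    split_ifs
    exacts [h₁, h₂]
  have h2 : (2 : Ordinal) < w1 :=
    (natCast_lt_omega0 2).trans (w1_eq_omega_one ▸ omega0_lt_omega_one)
  obtain ⟨d, ⟨-, hdC⟩, hd⟩ := hD.2.2 (max o 2) (max_lt ho h2)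
  have h2d : 2 ≤ d := le_of_max_le_right hd
  have hd₁ : d ∈ C₁ := by simpa using hdC 0 (lt_of_lt_of_le (by norm_num) h2d)
  have hd₂ : d ∈ C₂ := by simpa using hdC 1 (lt_of_lt_of_le (by norm_num) h2d)
  exact ⟨d, ⟨hd₁, hd₂⟩, le_of_max_le_left hd⟩

end IsClubIn

theorem isClubIn_setOf_isSuccLimit : IsClubIn {α | α < w1 ∧ IsSuccLimit α} := by
  refine ⟨fun x hx => hx.1, fun s hs hne hlt => ⟨hlt, ?_⟩, fun o ho => ?_⟩
  · by_contra hnot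
    exact hnot (hs (csSup_mem_of_not_isSuccLimit hne ⟨w1, fun x hx => (hs hx).1.le⟩ hnot)).2
  · refine ⟨o + ω, ⟨?_, isSuccLimit_add o isSuccLimit_omega0⟩, le_self_add⟩
    rw [w1_eq_omega_one] at ho ⊢
    exact isPrincipal_add_omega 1 ho omega0_lt_omega_one

namespace IsStationaryIn

variable {S : Set Ordinal}

theorem mono {T : Set Ordinal} (hT : IsStationaryIn T) (hTS : T ⊆ S) (hS : S ⊆ Iio w1) :
    IsStationaryIn S :=
  ⟨hS, fun C hC => (hT.2 C hC).mono (inter_subset_inter_left C hTS)⟩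

theorem sep_isSuccLimit (hS : IsStationaryIn S) : IsStationaryIn {α ∈ S | IsSuccLimit α} := by
  refine ⟨fun x hx => hS.1 hx.1, fun C hC => ?_⟩
  obtain ⟨x, hxS, hxC, -, hx⟩ := hS.2 _ (hC.inter isClubIn_setOf_isSuccLimit)
  exact ⟨x, ⟨hxS, hx⟩, hxC⟩

/-- Fodor's pressing-down lemma. -/
theorem exists_isStationaryIn_setOf_eq (hS : IsStationaryIn S) {f : Ordinal → Ordinal}
    (hf : ∀ α ∈ S, f α < α) : ∃ γ, IsStationaryIn {α ∈ S | f α = γ} := by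
  by_contra! hnot
  have hclub : ∀ γ, ∃ C, IsClubIn C ∧ {α ∈ S | f α = γ} ∩ C = ∅ := fun γ => by
    have := hnot γ
    simp only [IsStationaryIn, not_and, not_forall, not_nonempty_iff_eq_empty] at this
    obtain ⟨C, hC, hSC⟩ := this fun x hx => hS.1 hx.1
    exact ⟨C, hC, hSC⟩
  choose C hC hCS using hclub
  obtain ⟨α, hαS, -, hαC⟩ := hS.2 _ (isClubIn_diagInter hC)
  exact (hCS (f α)).subset ⟨⟨hαS, rfl⟩, hαC (f α) (hf α hαS)⟩

theorem exists_isStationaryIn_sep_of_forall_exists_lt (hS : IsStationaryIn S)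
    {P : Ordinal → Ordinal → Prop} (hP : ∀ α ∈ S, ∃ γ < α, P α γ) :
    ∃ γ, IsStationaryIn {α ∈ S | P α γ} := by
  choose! f hf hfP using hP
  obtain ⟨γ, hγ⟩ := hS.exists_isStationaryIn_setOf_eq hf
  exact ⟨γ, hγ.mono (fun α hα => ⟨hα.1, hα.2 ▸ hfP α hα.1⟩) fun α hα => hS.1 hα.1⟩

end IsStationaryIn

section LadderSpace

variable {L : Ordinal → Set Ordinal} (a : {o : Ordinal // o < w1 ∧ IsSuccLimit o})

lemma exists_ladder_tail_subset_of_generateOpen {O : Set LPsi}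
    (hO : TopologicalSpace.GenerateOpen (lBasic L) O) (ha : (Sum.inr a : LPsi) ∈ O) :
    ∃ ξ < a.1, ∀ p : {o : Ordinal // o < w1}, p.1 ∈ L a.1 → ξ ≤ p.1 → (Sum.inl p : LPsi) ∈ O := by
  induction hO with
  | basic s hs =>
    rcases hs with ⟨p, rfl⟩ | ⟨a', ξ, hξ, rfl⟩
    · exact absurd (mem_singleton_iff.1 ha) Sum.inr_ne_inl
    · rcases ha with ha | ⟨p, -, hp⟩
      · obtain rfl : a = a' := Sum.inr_injective ha
        exact ⟨ξ, hξ, fun p hp hξp => mem_insert_of_mem _ ⟨p, ⟨hp, hξp⟩, rfl⟩⟩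
      · exact absurd hp Sum.inl_ne_inr
  | univ => exact ⟨0, a.2.2.pos, fun _ _ _ => trivial⟩
  | inter s t _ _ ihs iht =>
    obtain ⟨ξ₁, hξ₁, h₁⟩ := ihs ha.1
    obtain ⟨ξ₂, hξ₂, h₂⟩ := iht ha.2
    exact ⟨max ξ₁ ξ₂, max_lt hξ₁ hξ₂, fun p hp hξp =>
      ⟨h₁ p hp (le_of_max_le_left hξp), h₂ p hp (le_of_max_le_right hξp)⟩⟩
  | sUnion 𝒮 _ ih =>
    obtain ⟨s, hs, has⟩ := ha
    obtain ⟨ξ, hξ, h⟩ := ih s hs has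
    exact ⟨ξ, hξ, fun p hp hξp => ⟨s, hs, h p hp hξp⟩⟩

lemma exists_inl_lt_mem_of_mem_nhds_inr (hL : IsLadderSystem L) {t : Set LPsi}
    (ht : t ∈ @nhds _ (lTop L) (Sum.inr a : LPsi)) :
    ∃ p : {o : Ordinal // o < w1}, p.1 < a.1 ∧ (Sum.inl p : LPsi) ∈ t := by
  obtain ⟨O, hOt, hO, haO⟩ := (@mem_nhds_iff _ (lTop L) _ _).1 ht
  obtain ⟨ξ, hξ, htail⟩ := exists_ladder_tail_subset_of_generateOpen a hO haO
  obtain ⟨hLα, hcofinal, -⟩ := hL a.1 a.2.1 a.2.2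
  obtain ⟨γ, hγL, hξγ⟩ := hcofinal ξ hξ
  have hγa : γ < a.1 := hLα hγL
  exact ⟨⟨γ, hγa.trans a.2.1⟩, hγa, hOt (htail _ hγL hξγ.le)⟩

end LadderSpace

theorem clubsuitStar_entourage_contains_stationary_square_general
    (L : Ordinal → Set Ordinal) (hL : IsLadderSystem L)
    (u : UniformSpace LPsi) (hcompat : u.toTopologicalSpace = lTop L)
    (U : Set (LPsi × LPsi)) (hU : U ∈ @uniformity LPsi u)
    (S : Set Ordinal) (hS : IsStationaryIn S) :
    ∃ S' ⊆ S, (∀ α ∈ S', Order.IsSuccLimit α) ∧ IsStationaryIn S' ∧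
      ∀ α, ∀ hα : α < w1 ∧ Order.IsSuccLimit α, α ∈ S' →
        ∀ β, ∀ hβ : β < w1 ∧ Order.IsSuccLimit β, β ∈ S' →
          ((Sum.inr ⟨α, hα⟩ : LPsi), (Sum.inr ⟨β, hβ⟩ : LPsi)) ∈ U := by
  obtain ⟨V, hV, hVsymm, hVU⟩ := comp_symm_mem_uniformity_sets hU
  have hnear : ∀ α ∈ {α ∈ S | IsSuccLimit α}, ∃ γ < α,
      ∃ (hα : α < w1 ∧ IsSuccLimit α) (hγ : γ < w1),
        ((Sum.inr ⟨α, hα⟩ : LPsi), (Sum.inl ⟨γ, hγ⟩ : LPsi)) ∈ V := by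
    rintro α ⟨hαS, hαlim⟩
    have hα : α < w1 ∧ IsSuccLimit α := ⟨hS.1 hαS, hαlim⟩
    obtain ⟨p, hpα, hp⟩ := exists_inl_lt_mem_of_mem_nhds_inr ⟨α, hα⟩ hL
      (hcompat ▸ UniformSpace.ball_mem_nhds _ hV)
    exact ⟨p.1, hpα, hα, p.2, hp⟩
  obtain ⟨γ, hS'⟩ := hS.sep_isSuccLimit.exists_isStationaryIn_sep_of_forall_exists_lt hnear
  refine ⟨_, fun α hα => hα.1.1, fun α hα => hα.1.2, hS', ?_⟩
  rintro α _ ⟨-, _, _, hαγ⟩ β _ ⟨-, _, _, hβγ⟩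
  exact hVU ⟨_, hαγ, hVsymm.symm _ _ hβγ⟩

theorem clubsuitStar_entourage_contains_stationary_square
    (L : Ordinal → Set Ordinal) (hL : IsLadderSystem L) (hcs : IsClubsuitStar L)
    (u : UniformSpace LPsi) (hcompat : u.toTopologicalSpace = lTop L)
    (U : Set (LPsi × LPsi)) (hU : U ∈ @uniformity LPsi u)
    (S : Set Ordinal) (hS : IsStationaryIn S) :
    ∃ S' ⊆ S, (∀ α ∈ S', Order.IsSuccLimit α) ∧ IsStationaryIn S' ∧
      ∀ α, ∀ hα : α < w1 ∧ Order.IsSuccLimit α, α ∈ S' →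
        ∀ β, ∀ hβ : β < w1 ∧ Order.IsSuccLimit β, β ∈ S' →
          ((Sum.inr ⟨α, hα⟩ : LPsi), (Sum.inr ⟨β, hβ⟩ : LPsi)) ∈ U :=
  clubsuitStar_entourage_contains_stationary_square_general L hL u hcompat U hU S hS
end

section
/- If a ladder system ℒ = (L_α : α ∈ Lim) on ω₁ is uniformizable, then ℒ is ℝ-embeddable: there is a continuous map f : Ψ(ℒ) → 2^ω (equivalently ℝ) whose restriction to Lim × {1} is injective. -/
/-- A ladder system is uniformizable if every sequence of colourings `f α : L α → ℕ`
can be uniformized: there is `F : ω₁ → ℕ` agreeing with each `f α` on all but finitely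
many points of `L α`. -/
def IsUniformizable (L : Ordinal → Set Ordinal) : Prop :=
  ∀ f : Ordinal → Ordinal → ℕ, ∃ F : Ordinal → ℕ,
    ∀ α, α < w1 → Order.IsSuccLimit α → {β | β ∈ L α ∧ F β ≠ f α β}.Finite

/-!
Fix an injective assignment `α ↦ x α ∈ 2^ω` on `ω₁` (possible since `ℵ₁ ≤ 𝔠`). For each
bit `n`, uniformize the colourings that are constantly `x α n` on `L α`; the uniformizing
functions `F n` give the values at level 0, and `x α` is the value at `(α, 1)`. Each
coordinate then disagrees with its value at `(α, 1)` only at finitely many points of `L α`;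
these lie below `α`, so a tail of the ladder avoids them, which is continuity in `Ψ(ℒ)`.
-/

open Set Order Topology

theorem exists_injOn_Iio_w1_cantor : ∃ x : Ordinal.{0} → ℕ → Bool, InjOn x (Iio w1) := by
  have hcard : Cardinal.lift.{0} (Cardinal.mk (Iio w1)) ≤
      Cardinal.lift.{1} (Cardinal.mk (ℕ → Bool)) := by
    rw [Cardinal.mk_Iio_ordinal, w1, Cardinal.card_ord, Cardinal.lift_id', ← Cardinal.power_def,
      Cardinal.mk_bool, Cardinal.mk_nat, Cardinal.two_power_aleph0]
    exact Cardinal.lift_le.mpr Cardinal.aleph_one_le_continuum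
  obtain ⟨e⟩ := Cardinal.lift_mk_le'.mp hcard
  refine ⟨fun o => if h : o < w1 then e ⟨o, h⟩ else default, fun a ha b hb hab => ?_⟩
  simp only [dif_pos (show a < w1 from ha), dif_pos (show b < w1 from hb)] at hab
  exact congrArg Subtype.val (e.injective hab)

theorem Order.IsSuccLimit.exists_lt_forall_lt_of_finite {X : Type*} [LinearOrder X] [OrderBot X]
    [SuccOrder X] {α : X} (hα : IsSuccLimit α) {S : Set X} (hS : S.Finite) (hSα : S ⊆ Iio α) :
    ∃ ξ < α, ∀ s ∈ S, s < ξ := by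
  classical
  refine ⟨hS.toFinset.sup succ, ?_, fun s hs =>
    (lt_succ_of_not_isMax (not_isMax_of_lt (hSα hs))).trans_le ?_⟩
  · exact (Finset.sup_lt_iff hα.bot_lt).mpr fun s hs => hα.succ_lt (hSα (hS.mem_toFinset.mp hs))
  · exact Finset.le_sup (f := succ) (hS.mem_toFinset.mpr hs)

theorem IsUniformizable.exists_uniformizing {L : Ordinal → Set Ordinal} (hL : IsUniformizable L)
    {C : Type*} [Encodable C] [Inhabited C] (f : Ordinal → Ordinal → C) :
    ∃ F : Ordinal → C, ∀ α, α < w1 → IsSuccLimit α → {β | β ∈ L α ∧ F β ≠ f α β}.Finite := by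
  obtain ⟨G, hG⟩ := hL fun α β => Encodable.encode (f α β)
  refine ⟨fun β => (Encodable.decode (G β)).getD default, fun α hα hlim => (hG α hα hlim).subset ?_⟩
  rintro β ⟨hβL, hβF⟩
  refine ⟨hβL, fun hGβ => hβF ?_⟩
  simp only [hGβ, Encodable.encodek, Option.getD_some]

theorem isOpen_lTop_of_forall_inr (L : Ordinal → Set Ordinal) (U : Set LPsi)
    (hU : ∀ a : {o : Ordinal // o < w1 ∧ IsSuccLimit o}, Sum.inr a ∈ U →
      ∃ ξ < a.1, ∀ p : {o : Ordinal // o < w1}, p.1 ∈ L a.1 → ξ ≤ p.1 → (Sum.inl p : LPsi) ∈ U) :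
    IsOpen[lTop L] U := by
  refine (@isOpen_iff_forall_mem_open LPsi (lTop L) U).mpr ?_
  rintro (p | a) hx
  · exact ⟨{Sum.inl p}, singleton_subset_iff.mpr hx,
      TopologicalSpace.isOpen_generateFrom_of_mem (Or.inl ⟨p, rfl⟩), rfl⟩
  · obtain ⟨ξ, hξ, hξU⟩ := hU a hx
    refine ⟨_, ?_, TopologicalSpace.isOpen_generateFrom_of_mem (Or.inr ⟨a, ξ, hξ, rfl⟩),
      mem_insert _ _⟩
    rintro y (rfl | ⟨p, ⟨hpL, hξp⟩, rfl⟩)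
    exacts [hx, hξU p hpL hξp]

theorem continuous_lTop_of_finite_ne {L : Ordinal → Set Ordinal}
    (hL : ∀ α, α < w1 → IsSuccLimit α → L α ⊆ Iio α) {Y : Type*} [TopologicalSpace Y]
    [DiscreteTopology Y] (g : LPsi → Y)
    (hg : ∀ a : {o : Ordinal // o < w1 ∧ IsSuccLimit o},
      {p : {o : Ordinal // o < w1} | p.1 ∈ L a.1 ∧ g (Sum.inl p) ≠ g (Sum.inr a)}.Finite) :
    Continuous[lTop L, _] g := by
  refine @continuous_discrete_rng _ _ (lTop L) _ _ _ |>.mpr fun b => ?_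
  refine isOpen_lTop_of_forall_inr L _ fun a ha => ?_
  have hbad : Subtype.val '' {p | p.1 ∈ L a.1 ∧ g (Sum.inl p) ≠ g (Sum.inr a)} ⊆ Iio a.1 := by
    rintro _ ⟨p, ⟨hpL, -⟩, rfl⟩
    exact hL a.1 a.2.1 a.2.2 hpL
  obtain ⟨ξ, hξ, hξbad⟩ := a.2.2.exists_lt_forall_lt_of_finite ((hg a).image _) hbad
  refine ⟨ξ, hξ, fun p hpL hξp => ?_⟩
  by_contra hpb
  exact (hξbad p.1 ⟨p, ⟨hpL, fun h => hpb (h.trans ha)⟩, rfl⟩).not_ge hξp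

theorem uniformizable_ladder_system_is_R_embeddable
    (L : Ordinal → Set Ordinal) (hL : IsLadderSystem L) (hunif : IsUniformizable L) :
    ∃ f : LPsi → (ℕ → Bool),
      @Continuous LPsi (ℕ → Bool) (lTop L) _ f ∧
      Function.Injective
        (fun a : {o : Ordinal // o < w1 ∧ Order.IsSuccLimit o} => f (Sum.inr a)) := by
  obtain ⟨x, hx⟩ := exists_injOn_Iio_w1_cantor
  choose F hF using fun n => hunif.exists_uniformizing fun α _ => x α n
  refine ⟨Sum.elim (fun p n => F n p.1) (fun a => x a.1), ?_,
    fun a b hab => Subtype.ext (hx a.2.1 b.2.1 hab)⟩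
  refine @continuous_pi _ _ _ (lTop L) _ _ fun n =>
    continuous_lTop_of_finite_ne (fun α hα hlim => (hL α hα hlim).1) _ fun a => ?_
  exact (hF n a.1 a.2.1 a.2.2).preimage Subtype.val_injective.injOn
end
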